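/- Let T ∈ ℝ, let a, b, σ be positive real constants, let γ ≥ 0 and ψ ≥ 0, and set k := k(γ) where k(x) := √(a² + 2(1+b·x)·σ²). Then for every t ≤ T the denominator (ψ + (a+k)/σ²) + ((k−a)/σ² − ψ)·exp(−k(T−t)) is strictly positive, the function t ↦ Φ(t,T;ψ,γ) is differentiable on (−∞,T], Φ(T,T;ψ,γ) = ψ, and d/dt Φ(t,T;ψ,γ) = (σ²/2)·Φ(t,T;ψ,γ)² + a·Φ(t,T;ψ,γ) − (1 + b·γ) for all t ≤ T. -/

import Mathlib

/-- k(x) := √(a² + 2(1+b·x)·σ²). -/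
noncomputable def kfun (a b σ x : ℝ) : ℝ := Real.sqrt (a ^ 2 + 2 * (1 + b * x) * σ ^ 2)

/-- The explicit solution Φ(t,T;ψ,γ) of the Riccati equation with constant coefficient γ:
Φ(t,T;ψ,γ) = ( ((k−a)/σ²)(ψ+(a+k)/σ²) + ((a+k)/σ²)(ψ+(a−k)/σ²)e^{−k(T−t)} )
           / ( (ψ+(a+k)/σ²) + ((k−a)/σ²−ψ)e^{−k(T−t)} ), with k = k(γ). -/
noncomputable def Phi (a b σ ψ γ T t : ℝ) : ℝ :=
  ((kfun a b σ γ - a) / σ ^ 2 * (ψ + (a + kfun a b σ γ) / σ ^ 2) +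
      (a + kfun a b σ γ) / σ ^ 2 * (ψ + (a - kfun a b σ γ) / σ ^ 2) *
        Real.exp (-(kfun a b σ γ) * (T - t))) /
    ((ψ + (a + kfun a b σ γ) / σ ^ 2) +
      ((kfun a b σ γ - a) / σ ^ 2 - ψ) * Real.exp (-(kfun a b σ γ) * (T - t)))

/-!
The equation φ' = (σ²/2)φ² + aφ − (1 + bγ) factors as φ' = (σ²/2)(φ − p)(φ − q) with roots
p = (k − a)/σ² and q = −(a + k)/σ², and k = (σ²/2)(p − q). Along a solution, (φ − p)/(φ − q)
is then a multiple of e^{k t}, so φ is a Möbius transform of e^{−k(T−t)}; Φ is this transform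
with φ(T) = ψ. Its denominator (ψ − q)(1 − E) + (p − q)E, E = e^{−k(T−t)} ∈ (0, 1], is positive
because q < p and q < 0 ≤ ψ.
-/

open Real

lemma kfun_sq {a b σ x : ℝ} (h : 0 ≤ 1 + b * x) :
    kfun a b σ x ^ 2 = a ^ 2 + 2 * (1 + b * x) * σ ^ 2 :=
  sq_sqrt (by positivity)

lemma abs_lt_kfun {a b σ x : ℝ} (hσ : σ ≠ 0) (h : 0 < 1 + b * x) : |a| < kfun a b σ x := by
  rw [kfun, ← sqrt_sq_eq_abs]
  exact sqrt_lt_sqrt (sq_nonneg a)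
    (lt_add_of_pos_right _ (mul_pos (mul_pos two_pos h) (sq_pos_of_ne_zero hσ)))

lemma riccati_factor {s a g k : ℝ} (hs : s ≠ 0) (hk : k ^ 2 = a ^ 2 + 2 * g * s) (x : ℝ) :
    s / 2 * (x - (k - a) / s) * (x - -(a + k) / s) = s / 2 * x ^ 2 + a * x - g := by
  field_simp
  linear_combination -hk

section riccatiSol

variable {c p q k ψ T t : ℝ}

noncomputable def riccatiDenom (p q k ψ T t : ℝ) : ℝ :=
  (ψ - q) - (ψ - p) * exp (-k * (T - t))

noncomputable def riccatiSol (p q k ψ T t : ℝ) : ℝ :=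
  (p * (ψ - q) - q * (ψ - p) * exp (-k * (T - t))) / riccatiDenom p q k ψ T t

lemma riccatiSol_self (hpq : p ≠ q) : riccatiSol p q k ψ T T = ψ := by
  have hD : ψ - q - (ψ - p) * 1 ≠ 0 := by
    rw [mul_one, sub_sub_sub_cancel_left]
    exact sub_ne_zero.mpr hpq
  rw [riccatiSol, riccatiDenom, sub_self, mul_zero, exp_zero, div_eq_iff hD]
  ring

lemma riccatiDenom_pos (hpq : q < p) (hψ : q ≤ ψ) (hk : 0 ≤ k) (ht : t ≤ T) :
    0 < riccatiDenom p q k ψ T t := by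
  have hE₀ : 0 < exp (-k * (T - t)) := exp_pos _
  have hE₁ : exp (-k * (T - t)) ≤ 1 :=
    exp_le_one_iff.mpr (mul_nonpos_of_nonpos_of_nonneg (neg_nonpos.mpr hk) (sub_nonneg.mpr ht))
  have hconvex : riccatiDenom p q k ψ T t =
      (ψ - q) * (1 - exp (-k * (T - t))) + (p - q) * exp (-k * (T - t)) := by
    rw [riccatiDenom]
    ring
  rw [hconvex]
  exact add_pos_of_nonneg_of_pos (mul_nonneg (sub_nonneg.mpr hψ) (sub_nonneg.mpr hE₁))
    (mul_pos (sub_pos.mpr hpq) hE₀)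

lemma hasDerivAt_riccatiSol (hk : k = c * (p - q)) (hD : riccatiDenom p q k ψ T t ≠ 0) :
    HasDerivAt (riccatiSol p q k ψ T)
      (c * (riccatiSol p q k ψ T t - p) * (riccatiSol p q k ψ T t - q)) t := by
  have hE : HasDerivAt (fun s => exp (-k * (T - s))) (exp (-k * (T - t)) * k) t := by
    simpa using (((hasDerivAt_id t).const_sub T).const_mul (-k)).exp
  have hquot : HasDerivAt (riccatiSol p q k ψ T) _ t :=
    ((hE.const_mul (q * (ψ - p))).const_sub (p * (ψ - q))).div
      ((hE.const_mul (ψ - p)).const_sub (ψ - q)) hD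
  refine hquot.congr_deriv ?_
  subst hk
  simp only [riccatiSol, riccatiDenom] at hD ⊢
  generalize exp (-(c * (p - q)) * (T - t)) = E at hD ⊢
  field_simp
  ring

end riccatiSol

lemma Phi_eq_riccatiSol (a b σ ψ γ T t : ℝ) :
    Phi a b σ ψ γ T t = riccatiSol ((kfun a b σ γ - a) / σ ^ 2) (-(a + kfun a b σ γ) / σ ^ 2)
      (kfun a b σ γ) ψ T t := by
  rw [Phi, riccatiSol, riccatiDenom]
  congr 1 <;> ring

theorem Phi_solves_riccati
    (T a b σ γ ψ : ℝ) (hb : 0 < b) (hσ : 0 < σ)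
    (hγ : 0 ≤ γ) (hψ : 0 ≤ ψ) :
    (∀ t ≤ T,
      0 < (ψ + (a + kfun a b σ γ) / σ ^ 2) +
        ((kfun a b σ γ - a) / σ ^ 2 - ψ) * Real.exp (-(kfun a b σ γ) * (T - t))) ∧
    Phi a b σ ψ γ T T = ψ ∧
    (∀ t ≤ T, HasDerivWithinAt (fun s => Phi a b σ ψ γ T s)
      (σ ^ 2 / 2 * (Phi a b σ ψ γ T t) ^ 2 + a * Phi a b σ ψ γ T t - (1 + b * γ))
      (Set.Iic T) t) := by
  have hg : 0 < 1 + b * γ := by positivity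
  set k := kfun a b σ γ
  have hσ2 : 0 < σ ^ 2 := by positivity
  obtain ⟨hak, hka⟩ := abs_lt.mp (abs_lt_kfun (a := a) hσ.ne' hg)
  have hq : -(a + k) / σ ^ 2 < 0 := div_neg_of_neg_of_pos (by linarith) hσ2
  have hpq : -(a + k) / σ ^ 2 < (k - a) / σ ^ 2 := div_lt_div_of_pos_right (by linarith) hσ2
  have hk : k = σ ^ 2 / 2 * ((k - a) / σ ^ 2 - -(a + k) / σ ^ 2) := by
    field_simp
    ring
  have hden : ∀ t ≤ T, 0 < riccatiDenom ((k - a) / σ ^ 2) (-(a + k) / σ ^ 2) k ψ T t :=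
    fun t ht => riccatiDenom_pos hpq (hq.le.trans hψ) (by linarith) ht
  refine ⟨fun t ht => ?_, ?_, fun t ht => ?_⟩
  · convert hden t ht using 1
    rw [riccatiDenom]
    ring
  · rw [Phi_eq_riccatiSol]
    exact riccatiSol_self hpq.ne'
  · simp only [Phi_eq_riccatiSol]
    rw [← riccati_factor hσ2.ne' (kfun_sq hg.le)]
    exact (hasDerivAt_riccatiSol hk (hden t ht).ne').hasDerivWithinAt
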